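/- A square-integrable random field v on Ω × B belongs to L^2_sol (the orthogonal complement of L^2_pot in L^2(Ω×B,M)) if and only if ∇^{(ω)*}v = 0 holds Q-almost surely on the event that the cluster of the origin is infinite, where ∇^{(ω)*}v(ω) = (1/n^ω(0)) Σ_{b∈B} ω(b)(v(ω,b) − v(b.ω,−b)). -/

import Mathlib

open MeasureTheory Filter Topology
open scoped ENNReal NNReal Classical

namespace PercWalk

/-- The lattice `ℤ^d`. -/
abbrev Zd (d : ℕ) := Fin d → ℤ

/-- A percolation configuration: `ω (x, i)` is the state of the bond from `x` to `x + eᵢ`. -/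
abbrev Config (d : ℕ) := (Zd d × Fin d) → Bool

noncomputable section

variable {d : ℕ}

/-- The `i`-th unit vector of `ℤ^d`. -/
def unitV (d : ℕ) (i : Fin d) : Zd d := fun j => if j = i then 1 else 0

/-- The (unordered) nearest-neighbour edge `{x,y}` is open in the configuration `ω`. -/
def edgeOpen (ω : Config d) (x y : Zd d) : Prop :=
  (∃ i, y = x + unitV d i ∧ ω (x, i) = true) ∨ (∃ i, x = y + unitV d i ∧ ω (y, i) = true)

/-- Translation (shift) of a configuration by `x`: this is `x.ω`. -/
def shift (x : Zd d) (ω : Config d) : Config d := fun p => ω (x + p.1, p.2)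

/-- The open cluster of the point `x` in the configuration `ω`. -/
def cluster (ω : Config d) (x : Zd d) : Set (Zd d) :=
  {y | Relation.ReflTransGen (fun a b => edgeOpen ω a b) x y}

/-- The set of points lying in an infinite open cluster (a.s. the unique infinite cluster `C(ω)`). -/
def infCluster (ω : Config d) : Set (Zd d) := {x | (cluster ω x).Infinite}

/-- The event `#C₀(ω) = ∞`. -/
def InfiniteCluster0 (d : ℕ) : Set (Config d) := {ω | (cluster ω 0).Infinite}

/-- The set `B` of lattice neighbours of the origin, as a finset. -/
def nbrs (d : ℕ) : Finset (Zd d) :=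
  (Finset.univ : Finset (Fin d × Bool)).image
    (fun p => if p.2 then unitV d p.1 else -unitV d p.1)

/-- `n^ω(x)`: the number of neighbours of `x` in its cluster. -/
def deg (ω : Config d) (x : Zd d) : ℕ :=
  ((nbrs d).filter (fun e => edgeOpen ω x (x + e))).card

/-- `Q` is Bernoulli(`p`) bond percolation: the bonds are i.i.d. Bernoulli(`p`). -/
def IsBernoulli (Q : Measure (Config d)) (p : ℝ) : Prop :=
  IsProbabilityMeasure Q ∧
    ∀ s : Finset (Zd d × Fin d), ∀ f : (Zd d × Fin d) → Bool,
      Q {ω | ∀ a ∈ s, ω a = f a} =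
        ∏ a ∈ s, ENNReal.ofReal (if f a then p else 1 - p)

/-- The critical probability associated with a family `Qf p` of Bernoulli(`p`)
percolation measures. -/
def pcOf (Qf : ℝ → Measure (Config d)) : ℝ :=
  sSup {p : ℝ | p ∈ Set.Icc (0 : ℝ) 1 ∧ Qf p (InfiniteCluster0 d) = 0}

/-- The conditional measure `Q₀ = Q( · | #C₀(ω) = ∞)`. -/
def Q0 (Q : Measure (Config d)) : Measure (Config d) :=
  ProbabilityTheory.cond Q (InfiniteCluster0 d)

/-- The measure `M` on `Ω × B`, `∫ u dM = Q[∑_{b∈B} ω(b) u(ω,b) 1_{#C₀(ω)=∞}]`. -/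
def Mm (Q : Measure (Config d)) : Measure (Config d × Zd d) :=
  ∑ e ∈ nbrs d, Measure.map (fun ω => (ω, e))
    (Q.restrict {ω | edgeOpen ω 0 e ∧ ω ∈ InfiniteCluster0 d})

/-- A local function: it depends on finitely many bonds only. -/
def IsLocal (u : Config d → ℝ) : Prop :=
  ∃ s : Finset (Zd d × Fin d), ∀ ω ω' : Config d, (∀ a ∈ s, ω a = ω' a) → u ω = u ω'

/-- The gradient `∇^{(ω)} u (ω,b) = u(b.ω) - u(ω)` of a function on configurations. -/
def gradF (u : Config d → ℝ) : Config d × Zd d → ℝ := fun p => u (shift p.2 p.1) - u p.1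

/-- `L²_pot`: the closure in `L²(Ω × B, M)` of the set of gradients of local functions. -/
def L2pot (Q : Measure (Config d)) : Set (Lp ℝ 2 (Mm Q)) :=
  closure {v : Lp ℝ 2 (Mm Q) |
    ∃ u : Config d → ℝ, IsLocal u ∧ (v : Config d × Zd d → ℝ) =ᵐ[Mm Q] gradF u}

/-- `L²_sol`: the orthogonal complement of `L²_pot` in `L²(Ω × B, M)`. -/
def L2sol (Q : Measure (Config d)) : Set (Lp ℝ 2 (Mm Q)) :=
  {w : Lp ℝ 2 (Mm Q) | ∀ v ∈ L2pot Q, inner (𝕜 := ℝ) w v = 0}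

/-- The divergence `∇^{(ω)*} v (ω) = (1/n^ω(0)) ∑_{b∈B} ω(b) (v(ω,b) - v(b.ω,-b))`. -/
def divStarF (ω : Config d) (v : Config d → Zd d → ℝ) : ℝ :=
  (deg ω 0 : ℝ)⁻¹ * ∑ e ∈ nbrs d,
    if edgeOpen ω 0 e then v ω e - v (shift e ω) (-e) else 0

/-- The field `b̂(ω,e) = 1_{e=b} - 1_{e=-b}`. -/
def bhat (b : Zd d) : Config d × Zd d → ℝ :=
  fun p => (if p.2 = b then (1 : ℝ) else 0) - (if p.2 = -b then (1 : ℝ) else 0)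

/-- Scalar product of an integer vector with an integer vector, as a real number. -/
def dotZ (x y : Zd d) : ℝ := ∑ i, (x i : ℝ) * (y i : ℝ)

/-- Scalar product of a real vector with an integer vector. -/
def dotR (v : Fin d → ℝ) (y : Zd d) : ℝ := ∑ i, v i * (y i : ℝ)

/-- The generator `L^ω f(x) = (1/n^ω(x)) ∑_{y∼x} ω(x,y) (f(y) - f(x))`. -/
def Lgen (ω : Config d) (f : Zd d → ℝ) (x : Zd d) : ℝ :=
  (deg ω x : ℝ)⁻¹ * ∑ e ∈ nbrs d,
    if edgeOpen ω x (x + e) then f (x + e) - f x else 0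

/-- `G` is a family `(G_b)_{b ∈ B}` with `G_b ∈ L²_pot` and `b̂ + G_b ∈ L²_sol`
(`G_b` is the projection of `-b̂` on `L²_pot`), given by an everywhere-defined
representative. -/
def IsGradField (Q : Measure (Config d)) (G : Zd d → Config d → Zd d → ℝ) : Prop :=
  ∀ b ∈ nbrs d,
    (∃ g : Lp ℝ 2 (Mm Q), g ∈ L2pot Q ∧
      (g : Config d × Zd d → ℝ) =ᵐ[Mm Q] fun p => G b p.1 p.2) ∧
    (∀ v ∈ L2pot Q, ∫ p, (bhat b p + G b p.1 p.2) * (v : Config d × Zd d → ℝ) p ∂(Mm Q) = 0)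

/-- `χ(ω,·)` is a corrector associated with the family `G`: for `x` in the cluster of the
origin and an open bond `(x, x+e)`, `χ(ω,x+e)·b − χ(ω,x)·b = G_b(x.ω, e)`. -/
def IsCorrector (G : Zd d → Config d → Zd d → ℝ) (χ : Zd d → Fin d → ℝ) (ω : Config d) : Prop :=
  ∀ x ∈ cluster ω 0, ∀ e ∈ nbrs d, edgeOpen ω x (x + e) → ∀ b ∈ nbrs d,
    dotR (χ (x + e)) b - dotR (χ x) b = G b (shift x ω) e

/-- The Palm-type measure `P̄(A) = Q[1_A n^ω(0) 1_{0 ∈ C(ω)}]`. -/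
def Pbar (Q : Measure (Config d)) : Measure (Config d) :=
  Q.withDensity (fun ω => if (0 : Zd d) ∈ infCluster ω then (deg ω 0 : ℝ≥0∞) else 0)

/-- The open unit box `G = ]-1,1[^d`. -/
def boxG (d : ℕ) : Set (Fin d → ℝ) := {v | ∀ i, |v i| < 1}

/-- The point `ε x ∈ ℝ^d` for `x ∈ ℤ^d`. -/
def scl (ε : ℝ) (x : Zd d) : Fin d → ℝ := fun i => ε * (x i : ℝ)

end

end PercWalk

namespace PercWalk

noncomputable section Aux

variable {d : ℕ}

/-! ### Basic combinatorial lemmas -/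

lemma neg_mem_nbrs {e : Zd d} (he : e ∈ nbrs d) : -e ∈ nbrs d := by
  simp only [nbrs, Finset.mem_image, Finset.mem_univ, true_and] at he ⊢
  obtain ⟨⟨i, b⟩, rfl⟩ := he
  refine ⟨⟨i, !b⟩, ?_⟩
  cases b <;> simp

lemma edgeOpen_symm {ω : Config d} {x y : Zd d} : edgeOpen ω x y ↔ edgeOpen ω y x :=
  or_comm

lemma unitV_mem_nbrs (i : Fin d) : unitV d i ∈ nbrs d :=
  Finset.mem_image.2 ⟨(i, true), Finset.mem_univ _, rfl⟩

lemma neg_unitV_mem_nbrs (i : Fin d) : -unitV d i ∈ nbrs d :=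
  Finset.mem_image.2 ⟨(i, false), Finset.mem_univ _, rfl⟩

lemma edgeOpen_dest {ω : Config d} {x y : Zd d} (h : edgeOpen ω x y) :
    ∃ e ∈ nbrs d, y = x + e := by
  rcases h with ⟨i, hy, -⟩ | ⟨i, hx, -⟩
  · exact ⟨unitV d i, unitV_mem_nbrs i, hy⟩
  · refine ⟨-unitV d i, neg_unitV_mem_nbrs i, ?_⟩
    rw [hx]; abel

lemma deg_pos_of_infinite {ω : Config d} (h : (cluster ω 0).Infinite) :
    0 < deg ω 0 := by
  have h2 : ∃ y ∈ cluster ω 0, y ≠ (0 : Zd d) := by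
    by_contra hc
    push_neg at hc
    exact h (Set.Finite.subset (Set.finite_singleton 0) (fun y hy => hc y hy))
  obtain ⟨y, hy, hy0⟩ := h2
  rcases (Relation.ReflTransGen.cases_head hy) with h0 | ⟨z, hz, -⟩
  · exact absurd h0.symm hy0
  · obtain ⟨e, he, rfl⟩ := edgeOpen_dest hz
    rw [deg, Finset.card_pos]
    exact ⟨e, Finset.mem_filter.2 ⟨he, by simpa using hz⟩⟩

/-! ### Shift lemmas -/

@[simp] lemma shift_shift (x y : Zd d) (ω : Config d) :
    shift x (shift y ω) = shift (y + x) ω := by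
  funext p; simp [shift, add_assoc]

@[simp] lemma shift_zero (ω : Config d) : shift (0 : Zd d) ω = ω := by
  funext p; simp [shift]

lemma edgeOpen_shift {x : Zd d} {ω : Config d} {a b : Zd d} :
    edgeOpen (shift x ω) a b ↔ edgeOpen ω (x + a) (x + b) := by
  constructor
  · rintro (⟨i, hb, hω⟩ | ⟨i, ha, hω⟩)
    · exact Or.inl ⟨i, by rw [hb]; abel, hω⟩
    · exact Or.inr ⟨i, by rw [ha]; abel, hω⟩
  · rintro (⟨i, hb, hω⟩ | ⟨i, ha, hω⟩)
    · exact Or.inl ⟨i, by apply add_left_cancel (a := x); rw [hb]; abel, hω⟩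
    · exact Or.inr ⟨i, by apply add_left_cancel (a := x); rw [ha]; abel, hω⟩

lemma mem_cluster_shift {x : Zd d} {ω : Config d} {a y : Zd d} :
    y ∈ cluster (shift x ω) a ↔ x + y ∈ cluster ω (x + a) := by
  constructor
  · intro h
    exact Relation.ReflTransGen.lift (fun z => x + z)
      (fun u v huv => edgeOpen_shift.1 huv) _ _ h
  · intro h
    have := Relation.ReflTransGen.lift (fun z => -x + z)
      (fun u v huv => by
        have : edgeOpen (shift x ω) (-x + u) (-x + v) := by
          rw [edgeOpen_shift]
          simpa [add_assoc, add_neg_cancel, neg_add_cancel] using huv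
        exact this) _ _ h
    simpa [neg_add_cancel_left, Function.onFun, cluster] using this

lemma cluster_shift (x : Zd d) (ω : Config d) (a : Zd d) :
    cluster (shift x ω) a = (fun y => x + y) ⁻¹' cluster ω (x + a) := by
  ext y; exact mem_cluster_shift

lemma cluster_shift_infinite {x : Zd d} {ω : Config d} {a : Zd d} :
    (cluster (shift x ω) a).Infinite ↔ (cluster ω (x + a)).Infinite := by
  rw [cluster_shift]
  constructor
  · intro h
    exact Set.Infinite.mono (Set.image_preimage_subset _ _)
      (Set.Infinite.image (fun u _ v _ huv => by simpa using huv) h)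
  · intro h
    have : cluster ω (x + a) ⊆ (fun y => x + y) '' ((fun y => x + y) ⁻¹' cluster ω (x + a)) := by
      intro z hz
      exact ⟨-x + z, by simpa [add_neg_cancel_left] using hz, by simp [add_neg_cancel_left]⟩
    exact Set.Infinite.of_image _ (Set.Infinite.mono this h)

lemma cluster_eq_of_edge {ω : Config d} {a b : Zd d} (h : edgeOpen ω a b) :
    cluster ω a = cluster ω b := by
  ext c
  constructor
  · intro hc
    exact Relation.ReflTransGen.trans
      (Relation.ReflTransGen.single (edgeOpen_symm.1 h)) hc
  · intro hc
    exact Relation.ReflTransGen.trans (Relation.ReflTransGen.single h) hc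

/-! ### Measurability -/

lemma measurableSet_edgeOpen (x y : Zd d) :
    MeasurableSet {ω : Config d | edgeOpen ω x y} := by
  have : {ω : Config d | edgeOpen ω x y} =
      (⋃ i, {ω : Config d | y = x + unitV d i} ∩ {ω | ω (x, i) = true}) ∪
      (⋃ i, {ω : Config d | x = y + unitV d i} ∩ {ω | ω (y, i) = true}) := by
    ext ω; simp [edgeOpen, Set.mem_iUnion, Set.mem_setOf_eq, and_comm]
  rw [this]
  refine MeasurableSet.union ?_ ?_
  · refine MeasurableSet.iUnion fun i => (MeasurableSet.const _).inter ?_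
    have hm : Measurable fun ω : Config d => ω (x, i) := measurable_pi_apply _
    exact hm (measurableSet_singleton true)
  · refine MeasurableSet.iUnion fun i => (MeasurableSet.const _).inter ?_
    have hm : Measurable fun ω : Config d => ω (y, i) := measurable_pi_apply _
    exact hm (measurableSet_singleton true)

lemma measurable_shift (x : Zd d) : Measurable (shift (d := d) x) := by
  apply measurable_pi_lambda
  intro a
  exact measurable_pi_apply _

/-- The shift as a measurable equivalence. -/
def shiftEquiv (x : Zd d) : Config d ≃ᵐ Config d where
  toFun := shift x
  invFun := shift (-x)
  left_inv := fun ω => by simp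
  right_inv := fun ω => by simp
  measurable_toFun := measurable_shift x
  measurable_invFun := measurable_shift (-x)

lemma measurableSet_chain (l : List (Zd d)) (x : Zd d) :
    MeasurableSet {ω : Config d | List.Chain (fun a b => edgeOpen ω a b) x l} := by
  induction l generalizing x with
  | nil => simp [List.Chain]
  | cons b l ih =>
    have : {ω : Config d | List.Chain (fun a b => edgeOpen ω a b) x (b :: l)} =
        {ω : Config d | edgeOpen ω x b} ∩
          {ω : Config d | List.Chain (fun a b => edgeOpen ω a b) b l} := by
      ext ω; simp [List.Chain, List.chain_cons]
    rw [this]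
    exact (measurableSet_edgeOpen x b).inter (ih b)

lemma measurableSet_mem_cluster (x y : Zd d) :
    MeasurableSet {ω : Config d | y ∈ cluster ω x} := by
  have : {ω : Config d | y ∈ cluster ω x} =
      ⋃ l : List (Zd d),
        {ω : Config d | List.Chain (fun a b => edgeOpen ω a b) x l} ∩
          {ω : Config d | (x :: l).getLast (List.cons_ne_nil _ _) = y} := by
    ext ω
    simp only [Set.mem_iUnion, Set.mem_inter_iff, Set.mem_setOf_eq]
    constructor
    · intro h
      obtain ⟨l, hl, hlast⟩ := List.exists_isChain_cons_of_relationReflTransGen h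
      exact ⟨l, hl, hlast⟩
    · rintro ⟨l, hl, hlast⟩
      exact List.relationReflTransGen_of_exists_isChain_cons l hl hlast
  rw [this]
  exact MeasurableSet.iUnion fun l =>
    (measurableSet_chain l x).inter (MeasurableSet.const _)

lemma measurableSet_infiniteCluster0 :
    MeasurableSet (InfiniteCluster0 d) := by
  have : InfiniteCluster0 d =
      ⋂ t : Finset (Zd d), ⋃ y : Zd d, ⋃ _ : y ∉ t,
        {ω : Config d | y ∈ cluster ω 0} := by
    ext ω
    simp only [InfiniteCluster0, Set.mem_setOf_eq, Set.mem_iInter, Set.mem_iUnion]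
    constructor
    · intro h t
      by_contra hc
      push_neg at hc
      exact h (Set.Finite.subset t.finite_toSet fun y hy => by
        by_contra hyt; exact hc y hyt hy)
    · intro h hfin
      obtain ⟨y, hyt, hy⟩ := h hfin.toFinset
      exact hyt (hfin.mem_toFinset.2 hy)
  rw [this]
  exact MeasurableSet.iInter fun t => MeasurableSet.iUnion fun y =>
    MeasurableSet.iUnion fun _ => measurableSet_mem_cluster 0 y

/-- The event set `S e = {edge (0,e) open} ∩ {0 ∈ infinite cluster}`. -/
def evS (d : ℕ) (e : Zd d) : Set (Config d) :=
  {ω | edgeOpen ω 0 e ∧ ω ∈ InfiniteCluster0 d}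

lemma measurableSet_evS (e : Zd d) : MeasurableSet (evS d e) :=
  (measurableSet_edgeOpen 0 e).inter measurableSet_infiniteCluster0

lemma measurable_deg (x : Zd d) : Measurable fun ω : Config d => deg ω x := by
  have : (fun ω : Config d => deg ω x) =
      fun ω => ∑ e ∈ nbrs d, if edgeOpen ω x (x + e) then 1 else 0 := by
    funext ω; rw [deg, Finset.card_filter]
  rw [this]
  exact Finset.measurable_sum _ fun e _ =>
    Measurable.ite (measurableSet_edgeOpen x (x + e)) measurable_const measurable_const

/-! ### Cylinder sets -/

/-- Cylinder set. -/
def cylSet (s : Finset (Zd d × Fin d)) (f : (Zd d × Fin d) → Bool) : Set (Config d) :=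
  {ω | ∀ a ∈ s, ω a = f a}

/-- The collection of cylinder sets. -/
def cylinders (d : ℕ) : Set (Set (Config d)) :=
  {A | ∃ s f, A = cylSet s f}

lemma measurableSet_cylSet (s : Finset (Zd d × Fin d)) (f : (Zd d × Fin d) → Bool) :
    MeasurableSet (cylSet s f) := by
  have : cylSet s f = ⋂ a ∈ s, {ω : Config d | ω a = f a} := by
    ext ω; simp only [cylSet, Set.mem_setOf_eq, Set.mem_iInter]
  rw [this]
  refine MeasurableSet.biInter s.countable_toSet fun a _ => ?_
  have hm : Measurable fun ω : Config d => ω a := measurable_pi_apply _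
  exact hm (measurableSet_singleton (f a))

lemma isPiSystem_cylinders : IsPiSystem (cylinders d) := by
  rintro A ⟨s₁, f₁, rfl⟩ B ⟨s₂, f₂, rfl⟩ hne
  obtain ⟨ω₀, hω₁, hω₂⟩ : ∃ ω₀ : Config d, ω₀ ∈ cylSet s₁ f₁ ∧ ω₀ ∈ cylSet s₂ f₂ := hne
  refine ⟨s₁ ∪ s₂, fun a => if a ∈ s₁ then f₁ a else f₂ a, ?_⟩
  ext ω
  simp only [Set.mem_inter_iff, cylSet, Set.mem_setOf_eq, Finset.mem_union]
  constructor
  · rintro ⟨h₁, h₂⟩ a ha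
    by_cases has : a ∈ s₁
    · simp [has, h₁ a has]
    · simp [has, h₂ a (ha.resolve_left has)]
  · intro h
    constructor
    · intro a ha
      have := h a (Or.inl ha); simpa [ha] using this
    · intro a ha
      by_cases has : a ∈ s₁
      · have := h a (Or.inl has)
        simp only [has, if_true] at this
        rw [this, ← hω₁ a has, hω₂ a ha]
      · have := h a (Or.inr ha); simpa [has] using this

lemma generateFrom_cylinders :
    MeasurableSpace.generateFrom (cylinders d) =
      (inferInstance : MeasurableSpace (Config d)) := by
  refine le_antisymm ?_ ?_
  · rw [MeasurableSpace.generateFrom_le_iff]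
    rintro A ⟨s, f, rfl⟩
    exact measurableSet_cylSet s f
  · rw [show (inferInstance : MeasurableSpace (Config d)) = MeasurableSpace.pi from rfl,
      MeasurableSpace.pi]
    refine iSup_le fun a => ?_
    rintro A ⟨B, -, rfl⟩
    set m := MeasurableSpace.generateFrom (cylinders d) with hm
    have hsingle : ∀ b : Bool, MeasurableSet[m] ((fun ω : Config d => ω a) ⁻¹' {b}) := by
      intro b
      have : (fun ω : Config d => ω a) ⁻¹' {b} = cylSet {a} (fun _ => b) := by
        ext ω; simp [cylSet]
      rw [this]
      exact MeasurableSpace.measurableSet_generateFrom ⟨{a}, fun _ => b, rfl⟩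
    have hB : (fun ω : Config d => ω a) ⁻¹' B =
        (⋃ b ∈ B, (fun ω : Config d => ω a) ⁻¹' {b}) := by
      ext ω; simp
    rw [hB]
    have hcount : B.Countable := Set.to_countable B
    exact @MeasurableSet.biUnion _ _ m _ _ hcount (fun b _ => hsingle b)

/-! ### Shift invariance of Bernoulli measures -/

lemma IsBernoulli.map_shift {Q : Measure (Config d)} {p : ℝ}
    (hQ : IsBernoulli Q p) (x : Zd d) : Measure.map (shift x) Q = Q := by
  obtain ⟨hprob, hcyl⟩ := hQ
  have : IsProbabilityMeasure (Measure.map (shift x) Q) :=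
    MeasureTheory.Measure.isProbabilityMeasure_map (measurable_shift x).aemeasurable
  refine MeasureTheory.ext_of_generate_finite (cylinders d)
    generateFrom_cylinders.symm isPiSystem_cylinders ?_ (by simp)
  rintro A ⟨s, f, rfl⟩
  rw [Measure.map_apply (measurable_shift x) (measurableSet_cylSet s f)]
  have hpre : shift x ⁻¹' cylSet s f =
      cylSet (s.image fun a => (x + a.1, a.2)) (fun b => f (b.1 - x, b.2)) := by
    ext ω
    simp only [Set.mem_preimage, cylSet, Set.mem_setOf_eq, Finset.mem_image]
    constructor
    · rintro h b ⟨a, ha, rfl⟩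
      have := h a ha
      simpa [shift, add_sub_cancel_left] using this
    · intro h a ha
      have := h (x + a.1, a.2) ⟨a, ha, rfl⟩
      simpa [shift, add_sub_cancel_left] using this
  have hcyl' : ∀ (s : Finset (Zd d × Fin d)) (f : (Zd d × Fin d) → Bool),
      Q (cylSet s f) = ∏ a ∈ s, ENNReal.ofReal (if f a then p else 1 - p) := hcyl
  rw [hpre, hcyl', hcyl']
  rw [Finset.prod_image (by
    intro a _ b _ hab
    rw [Prod.mk.injEq] at hab
    exact Prod.ext (add_left_cancel hab.1) hab.2)]
  refine Finset.prod_congr rfl fun a _ => ?_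
  simp [add_sub_cancel_left]

/-! ### Transport of the restricted measures under shifts -/

lemma preimage_shift_evS (e : Zd d) :
    shift (d := d) e ⁻¹' evS d (-e) = evS d e := by
  ext ω
  simp only [Set.mem_preimage, evS, Set.mem_setOf_eq, InfiniteCluster0]
  constructor
  · rintro ⟨hedge, hinf⟩
    have h1 : edgeOpen ω (e + 0) (e + -e) := edgeOpen_shift.1 hedge
    rw [add_neg_cancel, add_zero] at h1
    have h2 : edgeOpen ω 0 e := edgeOpen_symm.1 h1
    have h3 : (cluster ω (e + 0)).Infinite := cluster_shift_infinite.1 hinf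
    rw [add_zero] at h3
    rw [← cluster_eq_of_edge h2] at h3
    exact ⟨h2, h3⟩
  · rintro ⟨hedge, hinf⟩
    have h1 : edgeOpen ω e 0 := edgeOpen_symm.1 hedge
    refine ⟨?_, ?_⟩
    · rw [edgeOpen_shift, add_zero, add_neg_cancel]
      exact h1
    · rw [cluster_shift_infinite, add_zero, cluster_eq_of_edge h1]
      exact hinf

lemma map_shift_restrict_evS {Q : Measure (Config d)} {p : ℝ}
    (hQ : IsBernoulli Q p) (e : Zd d) :
    Measure.map (shift e) (Q.restrict (evS d e)) = Q.restrict (evS d (-e)) := by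
  ext A hA
  rw [Measure.map_apply (measurable_shift e) hA, Measure.restrict_apply hA,
    Measure.restrict_apply ((measurable_shift e) hA)]
  have : Q (A ∩ evS d (-e)) = (Measure.map (shift e) Q) (A ∩ evS d (-e)) := by
    rw [hQ.map_shift]
  rw [this, Measure.map_apply (measurable_shift e) (hA.inter (measurableSet_evS _)),
    Set.preimage_inter, preimage_shift_evS]

/-! ### `0 ≤ pcOf` -/

lemma pcOf_nonneg {Qf : ℝ → Measure (Config d)}
    (hQf : ∀ q ∈ Set.Icc (0 : ℝ) 1, IsBernoulli (Qf q) q) : 0 ≤ pcOf Qf := by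
  have h0 : IsBernoulli (Qf 0) 0 := hQf 0 ⟨le_refl 0, zero_le_one⟩
  have hnull : Qf 0 (InfiniteCluster0 d) = 0 := by
    have hsub : InfiniteCluster0 d ⊆
        ⋃ i : Fin d, ({ω : Config d | ω (0, i) = true} ∪
          {ω : Config d | ω (-unitV d i, i) = true}) := by
      intro ω hω
      have hdeg := deg_pos_of_infinite hω
      rw [deg, Finset.card_pos] at hdeg
      obtain ⟨e, he⟩ := hdeg
      have hedge : edgeOpen ω 0 (0 + e) := (Finset.mem_filter.1 he).2
      rcases hedge with ⟨i, -, hω'⟩ | ⟨i, h0', hω'⟩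
      · exact Set.mem_iUnion.2 ⟨i, Or.inl hω'⟩
      · refine Set.mem_iUnion.2 ⟨i, Or.inr ?_⟩
        have he' : (0 : Zd d) + e = -unitV d i := by
          have h2 : (0 : Zd d) + e + unitV d i = 0 := h0'.symm
          linear_combination (norm := abel) h2
        rw [he'] at hω'
        exact hω'
    refine measure_mono_null hsub ?_
    refine measure_iUnion_null fun i => measure_union_null ?_ ?_
    · have := h0.2 {(⟨0, i⟩ : Zd d × Fin d)} (fun _ => true)
      simp only [Finset.prod_singleton, if_true, ENNReal.ofReal_zero] at this
      refine le_antisymm (le_of_le_of_eq (measure_mono ?_) this) zero_le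
      intro ω hω
      simp only [Set.mem_setOf_eq] at hω ⊢
      intro a ha
      simp only [Finset.mem_singleton] at ha
      rw [ha]; exact hω
    · have := h0.2 {(⟨-unitV d i, i⟩ : Zd d × Fin d)} (fun _ => true)
      simp only [Finset.prod_singleton, if_true, ENNReal.ofReal_zero] at this
      refine le_antisymm (le_of_le_of_eq (measure_mono ?_) this) zero_le
      intro ω hω
      simp only [Set.mem_setOf_eq] at hω ⊢
      intro a ha
      simp only [Finset.mem_singleton] at ha
      rw [ha]; exact hω
  refine le_csSup ⟨1, fun x hx => hx.1.2⟩ ⟨⟨le_refl 0, zero_le_one⟩, hnull⟩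

/-! ### The measure `Mm` and its decomposition -/

lemma isFiniteMeasure_restrict' (Q : Measure (Config d)) [IsFiniteMeasure Q]
    (s : Set (Config d)) : IsFiniteMeasure (Q.restrict s) :=
  ⟨by rw [Measure.restrict_apply_univ]; exact measure_lt_top Q s⟩

lemma map_le_Mm (Q : Measure (Config d)) {e : Zd d} (he : e ∈ nbrs d) :
    Measure.map (fun ω => (ω, e)) (Q.restrict (evS d e)) ≤ Mm Q := by
  have : Mm Q = ∑ e ∈ nbrs d, Measure.map (fun ω => (ω, e)) (Q.restrict (evS d e)) := rfl
  rw [this, Measure.le_iff]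
  intro A hA
  rw [Measure.finset_sum_apply]
  exact Finset.single_le_sum
    (f := fun e => Measure.map (fun ω => (ω, e)) (Q.restrict (evS d e)) A)
    (fun i _ => zero_le) he

lemma isFiniteMeasure_Mm (Q : Measure (Config d)) [IsFiniteMeasure Q] :
    IsFiniteMeasure (Mm Q) := by
  constructor
  have : Mm Q = ∑ e ∈ nbrs d, Measure.map (fun ω => (ω, e)) (Q.restrict (evS d e)) := rfl
  rw [this, Measure.finset_sum_apply]
  refine ENNReal.sum_lt_top.2 fun e _ => ?_
  haveI := isFiniteMeasure_restrict' Q (evS d e)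
  haveI := Measure.isFiniteMeasure_map (Q.restrict (evS d e)) (fun ω => (ω, e))
  exact measure_lt_top _ _

lemma memLp_comp_e {Q : Measure (Config d)} (v : Lp ℝ 2 (Mm Q)) {e : Zd d}
    (he : e ∈ nbrs d) :
    MemLp (fun ω => (v : Config d × Zd d → ℝ) (ω, e)) 2 (Q.restrict (evS d e)) := by
  have h1 : MemLp (v : Config d × Zd d → ℝ) 2
      (Measure.map (fun ω => (ω, e)) (Q.restrict (evS d e))) :=
    (Lp.memLp v).mono_measure (map_le_Mm Q he)
  exact ((measurableEmbedding_prod_mk_right e).memLp_map_measure_iff).1 h1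

lemma integral_Mm {Q : Measure (Config d)} (f : Config d × Zd d → ℝ)
    (hf : Integrable f (Mm Q)) :
    ∫ x, f x ∂(Mm Q) = ∑ e ∈ nbrs d, ∫ ω, f (ω, e) ∂(Q.restrict (evS d e)) := by
  have hMm : Mm Q = ∑ e ∈ nbrs d, Measure.map (fun ω => (ω, e)) (Q.restrict (evS d e)) := rfl
  rw [hMm, integral_finset_sum_measure (fun e he =>
    hf.mono_measure (by rw [hMm] at hf ⊢; exact map_le_Mm Q he))]
  exact Finset.sum_congr rfl fun e he =>
    (measurableEmbedding_prod_mk_right e).integral_map f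

/-! ### Local functions are bounded and measurable -/

lemma IsLocal.exists_repr {u : Config d → ℝ} (hu : IsLocal u) :
    ∃ (s : Finset (Zd d × Fin d)) (u' : (s → Bool) → ℝ),
      u = fun ω => u' (fun a => ω a.1) := by
  obtain ⟨s, hs⟩ := hu
  refine ⟨s, fun g => u (fun a => if h : a ∈ s then g ⟨a, h⟩ else false), ?_⟩
  funext ω
  exact hs ω _ (fun a ha => by simp [ha])

lemma IsLocal.exists_bound {u : Config d → ℝ} (hu : IsLocal u) :
    ∃ C, ∀ ω, |u ω| ≤ C := by
  obtain ⟨s, u', rfl⟩ := hu.exists_repr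
  obtain ⟨C, hC⟩ := Finite.exists_le fun g : (s → Bool) => |u' g|
  exact ⟨C, fun ω => hC _⟩

lemma IsLocal.measurable {u : Config d → ℝ} (hu : IsLocal u) :
    Measurable u := by
  obtain ⟨s, u', rfl⟩ := hu.exists_repr
  exact (measurable_of_countable u').comp
    (measurable_pi_lambda _ fun a => measurable_pi_apply _)

/-! ### Density of local functions: vanishing pairing implies a.e. zero -/

lemma ae_zero_of_forall_local {Q : Measure (Config d)} [IsProbabilityMeasure Q]
    {D : Config d → ℝ} (hD : Integrable D Q)
    (h : ∀ u : Config d → ℝ, IsLocal u → ∫ ω, D ω * u ω ∂Q = 0) :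
    D =ᵐ[Q] 0 := by
  -- a measurable representative
  set D₀ : Config d → ℝ := hD.1.mk D with hD₀def
  have hae : D =ᵐ[Q] D₀ := hD.1.ae_eq_mk
  have hD₀int : Integrable D₀ Q := hD.congr hae
  -- set integrals vanish on cylinders
  have hset : ∀ A ∈ cylinders d, ∫ ω in A, D₀ ω ∂Q = 0 := by
    rintro A ⟨s, f, rfl⟩
    have hloc : IsLocal ((cylSet s f).indicator (fun _ => (1 : ℝ))) := by
      refine ⟨s, fun ω ω' hωω' => ?_⟩
      have : ω ∈ cylSet s f ↔ ω' ∈ cylSet s f := by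
        constructor
        · intro hm a ha; rw [← hωω' a ha]; exact hm a ha
        · intro hm a ha; rw [hωω' a ha]; exact hm a ha
      by_cases hm : ω ∈ cylSet s f
      · rw [Set.indicator_of_mem hm, Set.indicator_of_mem (this.1 hm)]
      · rw [Set.indicator_of_notMem hm, Set.indicator_of_notMem (fun hc => hm (this.2 hc))]
    have h1 := h _ hloc
    have h2 : (fun ω => D ω * (cylSet s f).indicator (fun _ => (1 : ℝ)) ω) =
        (cylSet s f).indicator D := by
      funext ω
      by_cases hm : ω ∈ cylSet s f <;> simp [hm]
    rw [h2, integral_indicator (measurableSet_cylSet s f)] at h1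
    have hcg : ∫ ω in cylSet s f, D₀ ω ∂Q = ∫ ω in cylSet s f, D ω ∂Q :=
      setIntegral_congr_ae (measurableSet_cylSet s f) (hae.mono fun ω hω _ => hω.symm)
    rw [hcg]; exact h1
  have huniv : ∫ ω, D₀ ω ∂Q = 0 := by
    have h1 := h (fun _ => (1 : ℝ)) ⟨∅, fun _ _ _ => rfl⟩
    simp only [mul_one] at h1
    rw [← integral_congr_ae hae]
    exact h1
  -- positive and negative parts
  have hpos : Integrable (fun ω => max (D₀ ω) 0) Q := hD₀int.pos_part
  have hneg : Integrable (fun ω => max (-D₀ ω) 0) Q := hD₀int.neg.pos_part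
  set μp := Q.withDensity (fun ω => ENNReal.ofReal (max (D₀ ω) 0)) with hμp
  set μm := Q.withDensity (fun ω => ENNReal.ofReal (max (-D₀ ω) 0)) with hμm
  haveI : IsFiniteMeasure μp := isFiniteMeasure_withDensity_ofReal hpos.2
  haveI : IsFiniteMeasure μm := isFiniteMeasure_withDensity_ofReal hneg.2
  have hmeas₀ : StronglyMeasurable D₀ := hD.1.stronglyMeasurable_mk
  have happ : ∀ A : Set (Config d), MeasurableSet A → ∫ ω in A, D₀ ω ∂Q = 0 →
      μp A = μm A := by
    intro A hA hA0
    rw [hμp, hμm, withDensity_apply _ hA, withDensity_apply _ hA]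
    rw [← ofReal_integral_eq_lintegral_ofReal (hpos.integrableOn)
      (Filter.Eventually.of_forall fun ω => le_max_right _ _),
      ← ofReal_integral_eq_lintegral_ofReal (hneg.integrableOn)
      (Filter.Eventually.of_forall fun ω => le_max_right _ _)]
    congr 1
    have hsub : ∫ ω in A, (max (D₀ ω) 0 - max (-D₀ ω) 0) ∂Q = 0 := by
      have : (fun ω => max (D₀ ω) 0 - max (-D₀ ω) 0) = fun ω => D₀ ω := by
        funext ω; exact max_zero_sub_max_neg_zero_eq_self _
      rw [this]; exact hA0
    rw [integral_sub hpos.integrableOn hneg.integrableOn] at hsub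
    linarith
  have hμpm : μp = μm := by
    refine MeasureTheory.ext_of_generate_finite (cylinders d)
      generateFrom_cylinders.symm isPiSystem_cylinders ?_ ?_
    · rintro A hA
      refine happ A ?_ (hset A hA)
      obtain ⟨s, f, rfl⟩ := hA
      exact measurableSet_cylSet s f
    · exact happ Set.univ MeasurableSet.univ (by simpa using huniv)
  -- deduce that all set integrals of D₀ vanish
  have hzero : D₀ =ᵐ[Q] 0 := by
    refine ae_eq_zero_of_forall_setIntegral_eq_of_sigmaFinite
      (fun s hs _ => hD₀int.integrableOn) ?_
    intro A hA _
    have h1 : μp A = μm A := by rw [hμpm]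
    rw [hμp, hμm, withDensity_apply _ hA, withDensity_apply _ hA,
      ← ofReal_integral_eq_lintegral_ofReal (hpos.integrableOn)
      (Filter.Eventually.of_forall fun ω => le_max_right _ _),
      ← ofReal_integral_eq_lintegral_ofReal (hneg.integrableOn)
      (Filter.Eventually.of_forall fun ω => le_max_right _ _),
      ENNReal.ofReal_eq_ofReal_iff
        (setIntegral_nonneg hA fun ω _ => le_max_right _ _)
        (setIntegral_nonneg hA fun ω _ => le_max_right _ _)] at h1
    have hsub : ∫ ω in A, D₀ ω ∂Q =
        ∫ ω in A, (max (D₀ ω) 0 - max (-D₀ ω) 0) ∂Q := by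
      congr 1; funext ω; exact (max_zero_sub_max_neg_zero_eq_self _).symm
    rw [hsub, integral_sub hpos.integrableOn hneg.integrableOn, h1, sub_self]
  exact hae.trans hzero

/-! ### The divergence field and the main pairing computation -/

lemma measurableEmbedding_shift (x : Zd d) : MeasurableEmbedding (shift (d := d) x) :=
  (shiftEquiv x).measurableEmbedding

/-- The field `D(ω) = ∑_{e} 1_{S_e}(ω) (v(ω,e) - v(e.ω,-e))`. -/
def Dfield {Q : Measure (Config d)} (v : Lp ℝ 2 (Mm Q)) : Config d → ℝ :=
  fun ω => ∑ e ∈ nbrs d, (evS d e).indicator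
    (fun ω' => (v : Config d × Zd d → ℝ) (ω', e) -
      (v : Config d × Zd d → ℝ) (shift e ω', -e)) ω

lemma memLp_shift_comp {Q : Measure (Config d)} {p : ℝ} (hQ : IsBernoulli Q p)
    (v : Lp ℝ 2 (Mm Q)) {e : Zd d} (he : e ∈ nbrs d) :
    MemLp (fun ω => (v : Config d × Zd d → ℝ) (shift e ω, -e)) 2 (Q.restrict (evS d e)) := by
  have h1 : MemLp (fun ω => (v : Config d × Zd d → ℝ) (ω, -e)) 2
      (Q.restrict (evS d (-e))) := memLp_comp_e v (neg_mem_nbrs he)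
  rw [← map_shift_restrict_evS hQ e] at h1
  exact ((measurableEmbedding_shift e).memLp_map_measure_iff).1 h1

lemma integrable_h {Q : Measure (Config d)} {p : ℝ} (hQ : IsBernoulli Q p)
    (v : Lp ℝ 2 (Mm Q)) {e : Zd d} (he : e ∈ nbrs d) :
    Integrable (fun ω => (v : Config d × Zd d → ℝ) (ω, e) -
      (v : Config d × Zd d → ℝ) (shift e ω, -e)) (Q.restrict (evS d e)) := by
  haveI := hQ.1
  haveI := isFiniteMeasure_restrict' Q (evS d e)
  exact ((memLp_comp_e v he).sub (memLp_shift_comp hQ v he)).integrable one_le_two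

lemma integrable_Dfield {Q : Measure (Config d)} {p : ℝ} (hQ : IsBernoulli Q p)
    (v : Lp ℝ 2 (Mm Q)) : Integrable (Dfield v) Q := by
  haveI := hQ.1
  exact integrable_finset_sum _ fun e he =>
    (show IntegrableOn _ (evS d e) Q from integrable_h hQ v he).integrable_indicator
      (measurableSet_evS e)

lemma IsLocal.measurable_gradF {u : Config d → ℝ} (hu : IsLocal u) :
    Measurable (gradF u) := by
  have hum := hu.measurable
  have h1 : Measurable fun x : Config d × Zd d => u (shift x.2 x.1) :=
    measurable_from_prod_countable_left fun e => hum.comp (measurable_shift e)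
  exact h1.sub (hum.comp measurable_fst)

lemma pairing {Q : Measure (Config d)} {p : ℝ} (hQ : IsBernoulli Q p)
    (v : Lp ℝ 2 (Mm Q)) (u : Config d → ℝ) (hu : IsLocal u) :
    ∫ x, gradF u x * (v : Config d × Zd d → ℝ) x ∂(Mm Q)
      = - ∫ ω, Dfield v ω * u ω ∂Q := by
  haveI := hQ.1
  haveI := isFiniteMeasure_Mm Q
  obtain ⟨C, hC⟩ := hu.exists_bound
  have hum := hu.measurable
  have hC' : ∀ ω, ‖u ω‖ ≤ C := fun ω => by simpa [Real.norm_eq_abs] using hC ω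
  have hgm : Measurable (gradF u) := hu.measurable_gradF
  have hgb : ∀ x : Config d × Zd d, ‖gradF u x‖ ≤ C + C := fun x => by
    simp only [gradF, Real.norm_eq_abs]
    calc |u (shift x.2 x.1) - u x.1| ≤ |u (shift x.2 x.1)| + |u x.1| := abs_sub _ _
    _ ≤ C + C := add_le_add (hC _) (hC _)
  have hVint : Integrable (v : Config d × Zd d → ℝ) (Mm Q) :=
    (Lp.memLp v).integrable one_le_two
  have hint : Integrable (fun x => gradF u x * (v : Config d × Zd d → ℝ) x) (Mm Q) :=
    hVint.bdd_mul hgm.aestronglyMeasurable (Filter.Eventually.of_forall hgb)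
  have key : ∀ e ∈ nbrs d,
      ∫ ω, gradF u (ω, e) * (v : Config d × Zd d → ℝ) (ω, e) ∂(Q.restrict (evS d e))
        = (∫ ω, u ω * (v : Config d × Zd d → ℝ) (shift (-e) ω, e) ∂(Q.restrict (evS d (-e))))
          - ∫ ω, u ω * (v : Config d × Zd d → ℝ) (ω, e) ∂(Q.restrict (evS d e)) := by
    intro e he
    haveI := isFiniteMeasure_restrict' Q (evS d e)
    haveI := isFiniteMeasure_restrict' Q (evS d (-e))
    have hVe : Integrable (fun ω => (v : Config d × Zd d → ℝ) (ω, e))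
        (Q.restrict (evS d e)) := (memLp_comp_e v he).integrable one_le_two
    have h1 : Integrable (fun ω => u (shift e ω) * (v : Config d × Zd d → ℝ) (ω, e))
        (Q.restrict (evS d e)) :=
      hVe.bdd_mul (hum.comp (measurable_shift e)).aestronglyMeasurable (Filter.Eventually.of_forall fun ω => hC' _)
    have h2 : Integrable (fun ω => u ω * (v : Config d × Zd d → ℝ) (ω, e))
        (Q.restrict (evS d e)) :=
      hVe.bdd_mul hum.aestronglyMeasurable (Filter.Eventually.of_forall fun ω => hC' _)
    have hsplit : ∫ ω, gradF u (ω, e) * (v : Config d × Zd d → ℝ) (ω, e) ∂(Q.restrict (evS d e))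
        = (∫ ω, u (shift e ω) * (v : Config d × Zd d → ℝ) (ω, e) ∂(Q.restrict (evS d e)))
          - ∫ ω, u ω * (v : Config d × Zd d → ℝ) (ω, e) ∂(Q.restrict (evS d e)) := by
      rw [← integral_sub h1 h2]
      congr 1; funext ω
      simp only [gradF]; ring
    rw [hsplit]
    congr 1
    have hmap : Measure.map (shift (-e)) (Q.restrict (evS d (-e))) = Q.restrict (evS d e) := by
      have := map_shift_restrict_evS hQ (-e); rwa [neg_neg] at this
    rw [← hmap, (measurableEmbedding_shift (-e)).integral_map]
    refine integral_congr_ae (Filter.Eventually.of_forall fun ω => ?_)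
    have : shift e (shift (-e) ω) = ω := by
      rw [shift_shift, neg_add_cancel, shift_zero]
    simp only [this]
  have hre : (∑ e ∈ nbrs d, ∫ ω, u ω * (v : Config d × Zd d → ℝ) (shift (-e) ω, e)
        ∂(Q.restrict (evS d (-e))))
      = ∑ e ∈ nbrs d, ∫ ω, u ω * (v : Config d × Zd d → ℝ) (shift e ω, -e)
        ∂(Q.restrict (evS d e)) := by
    refine Finset.sum_nbij' (fun e => -e) (fun e => -e) (fun e he => neg_mem_nbrs he)
      (fun e he => neg_mem_nbrs he) (fun e _ => neg_neg e) (fun e _ => neg_neg e) ?_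
    intro e he
    rw [neg_neg]
  have hterm : ∀ e ∈ nbrs d,
      (∫ ω, u ω * (v : Config d × Zd d → ℝ) (shift e ω, -e) ∂(Q.restrict (evS d e)))
        - ∫ ω, u ω * (v : Config d × Zd d → ℝ) (ω, e) ∂(Q.restrict (evS d e))
      = - ∫ ω, (evS d e).indicator
          (fun ω' => (v : Config d × Zd d → ℝ) (ω', e) -
            (v : Config d × Zd d → ℝ) (shift e ω', -e)) ω * u ω ∂Q := by
    intro e he
    haveI := isFiniteMeasure_restrict' Q (evS d e)
    have hVe : Integrable (fun ω => (v : Config d × Zd d → ℝ) (ω, e))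
        (Q.restrict (evS d e)) := (memLp_comp_e v he).integrable one_le_two
    have hW : Integrable (fun ω => (v : Config d × Zd d → ℝ) (shift e ω, -e))
        (Q.restrict (evS d e)) := (memLp_shift_comp hQ v he).integrable one_le_two
    have h2 : Integrable (fun ω => u ω * (v : Config d × Zd d → ℝ) (ω, e))
        (Q.restrict (evS d e)) :=
      hVe.bdd_mul hum.aestronglyMeasurable (Filter.Eventually.of_forall fun ω => hC' _)
    have h3 : Integrable (fun ω => u ω * (v : Config d × Zd d → ℝ) (shift e ω, -e))
        (Q.restrict (evS d e)) :=
      hW.bdd_mul hum.aestronglyMeasurable (Filter.Eventually.of_forall fun ω => hC' _)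
    have hrw : ∫ ω, (evS d e).indicator
          (fun ω' => (v : Config d × Zd d → ℝ) (ω', e) -
            (v : Config d × Zd d → ℝ) (shift e ω', -e)) ω * u ω ∂Q
        = ∫ ω, ((v : Config d × Zd d → ℝ) (ω, e) -
            (v : Config d × Zd d → ℝ) (shift e ω, -e)) * u ω ∂(Q.restrict (evS d e)) := by
      rw [← integral_indicator (measurableSet_evS e)]
      refine integral_congr_ae (Filter.Eventually.of_forall fun ω => ?_)
      rw [Set.indicator_mul_left]
    rw [hrw, ← integral_sub h3 h2, ← integral_neg]
    refine integral_congr_ae (Filter.Eventually.of_forall fun ω => ?_)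
    ring
  have hints : ∀ e ∈ nbrs d, Integrable (fun ω => (evS d e).indicator
      (fun ω' => (v : Config d × Zd d → ℝ) (ω', e) -
        (v : Config d × Zd d → ℝ) (shift e ω', -e)) ω * u ω) Q := by
    intro e he
    have hind := (show IntegrableOn _ (evS d e) Q from
      integrable_h hQ v he).integrable_indicator (measurableSet_evS e)
    have := hind.bdd_mul hum.aestronglyMeasurable (Filter.Eventually.of_forall fun ω => hC' _)
    have heq : (fun ω => u ω * (evS d e).indicator
        (fun ω' => (v : Config d × Zd d → ℝ) (ω', e) -
          (v : Config d × Zd d → ℝ) (shift e ω', -e)) ω)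
      = fun ω => (evS d e).indicator
        (fun ω' => (v : Config d × Zd d → ℝ) (ω', e) -
          (v : Config d × Zd d → ℝ) (shift e ω', -e)) ω * u ω :=
      funext fun ω => mul_comm _ _
    rwa [heq] at this
  calc ∫ x, gradF u x * (v : Config d × Zd d → ℝ) x ∂(Mm Q)
      = ∑ e ∈ nbrs d, ∫ ω, gradF u (ω, e) * (v : Config d × Zd d → ℝ) (ω, e)
          ∂(Q.restrict (evS d e)) := integral_Mm _ hint
    _ = (∑ e ∈ nbrs d, ∫ ω, u ω * (v : Config d × Zd d → ℝ) (shift (-e) ω, e)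
          ∂(Q.restrict (evS d (-e))))
        - ∑ e ∈ nbrs d, ∫ ω, u ω * (v : Config d × Zd d → ℝ) (ω, e)
          ∂(Q.restrict (evS d e)) := by
        rw [← Finset.sum_sub_distrib]; exact Finset.sum_congr rfl key
    _ = (∑ e ∈ nbrs d, ∫ ω, u ω * (v : Config d × Zd d → ℝ) (shift e ω, -e)
          ∂(Q.restrict (evS d e)))
        - ∑ e ∈ nbrs d, ∫ ω, u ω * (v : Config d × Zd d → ℝ) (ω, e)
          ∂(Q.restrict (evS d e)) := by rw [hre]
    _ = ∑ e ∈ nbrs d, ((∫ ω, u ω * (v : Config d × Zd d → ℝ) (shift e ω, -e)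
          ∂(Q.restrict (evS d e)))
        - ∫ ω, u ω * (v : Config d × Zd d → ℝ) (ω, e)
          ∂(Q.restrict (evS d e))) := by rw [Finset.sum_sub_distrib]
    _ = ∑ e ∈ nbrs d, - ∫ ω, (evS d e).indicator
          (fun ω' => (v : Config d × Zd d → ℝ) (ω', e) -
            (v : Config d × Zd d → ℝ) (shift e ω', -e)) ω * u ω ∂Q :=
        Finset.sum_congr rfl hterm
    _ = - ∑ e ∈ nbrs d, ∫ ω, (evS d e).indicator
          (fun ω' => (v : Config d × Zd d → ℝ) (ω', e) -
            (v : Config d × Zd d → ℝ) (shift e ω', -e)) ω * u ω ∂Q := by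
        rw [Finset.sum_neg_distrib]
    _ = - ∫ ω, ∑ e ∈ nbrs d, (evS d e).indicator
          (fun ω' => (v : Config d × Zd d → ℝ) (ω', e) -
            (v : Config d × Zd d → ℝ) (shift e ω', -e)) ω * u ω ∂Q := by
        rw [integral_finset_sum _ hints]
    _ = - ∫ ω, Dfield v ω * u ω ∂Q := by
        congr 1
        refine integral_congr_ae (Filter.Eventually.of_forall fun ω => ?_)
        show _ = (∑ e ∈ nbrs d, (evS d e).indicator
          (fun ω' => (v : Config d × Zd d → ℝ) (ω', e) -
            (v : Config d × Zd d → ℝ) (shift e ω', -e)) ω) * u ω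
        rw [Finset.sum_mul]

lemma Dfield_zero_iff {Q : Measure (Config d)} (v : Lp ℝ 2 (Mm Q)) (ω : Config d) :
    Dfield v ω = 0 ↔ (ω ∈ InfiniteCluster0 d →
      divStarF ω (fun ω' e => (v : Config d × Zd d → ℝ) (ω', e)) = 0) := by
  by_cases hω : ω ∈ InfiniteCluster0 d
  · have hdeg : ((deg ω 0 : ℝ)) ≠ 0 := by
      exact_mod_cast (deg_pos_of_infinite hω).ne'
    have hD : Dfield v ω = ∑ e ∈ nbrs d,
        (if edgeOpen ω 0 e then (v : Config d × Zd d → ℝ) (ω, e) -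
          (v : Config d × Zd d → ℝ) (shift e ω, -e) else 0) := by
      refine Finset.sum_congr rfl fun e _ => ?_
      rw [Set.indicator_apply]
      exact if_congr (by simp [evS, hω]) rfl rfl
    have hSig : divStarF ω (fun ω' e => (v : Config d × Zd d → ℝ) (ω', e))
        = (deg ω 0 : ℝ)⁻¹ * Dfield v ω := by
      rw [hD]; simp only [divStarF]
    constructor
    · intro h _
      rw [hSig, h, mul_zero]
    · intro h
      have h2 := h hω
      rw [hSig] at h2
      rcases mul_eq_zero.1 h2 with h3 | h3
      · exact absurd h3 (inv_ne_zero hdeg)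
      · exact h3
  · have hD : Dfield v ω = 0 :=
      Finset.sum_eq_zero fun e _ => Set.indicator_of_notMem (fun hc => hω hc.2) _
    simp [hD, hω]

end Aux

end PercWalk

namespace PercWalk

/-- a square-integrable field `v` belongs to `L²_sol` iff `∇^{(ω)*} v = 0`
holds `Q`-a.s. on the event that the cluster of the origin is infinite. -/
theorem mem_L2sol_iff_divStar_eq_zero (d : ℕ) (hd : 2 ≤ d)
    (Qf : ℝ → MeasureTheory.Measure (Config d))
    (hQf : ∀ q ∈ Set.Icc (0 : ℝ) 1, IsBernoulli (Qf q) q)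
    (p : ℝ) (hp1 : p ≤ 1) (hpc : pcOf Qf < p)
    (v : MeasureTheory.Lp ℝ 2 (Mm (Qf p))) :
    v ∈ L2sol (Qf p) ↔
      ∀ᵐ ω ∂(Qf p), ω ∈ InfiniteCluster0 d →
        divStarF ω (fun ω' e => (v : Config d × Zd d → ℝ) (ω', e)) = 0 := by
  have hp0 : (0 : ℝ) ≤ p := le_trans (pcOf_nonneg hQf) hpc.le
  have hQ : IsBernoulli (Qf p) p := hQf p ⟨hp0, hp1⟩
  haveI := hQ.1
  haveI := isFiniteMeasure_Mm (Qf p)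
  -- step 1: membership in `L²_sol` is equivalent to orthogonality to all local gradients
  have hiff1 : v ∈ L2sol (Qf p) ↔ ∀ u : Config d → ℝ, IsLocal u →
      ∫ x, (v : Config d × Zd d → ℝ) x * gradF u x ∂(Mm (Qf p)) = 0 := by
    constructor
    · intro h u hu
      obtain ⟨C, hC⟩ := hu.exists_bound
      have hgb : ∀ x : Config d × Zd d, ‖gradF u x‖ ≤ C + C := fun x => by
        simp only [gradF, Real.norm_eq_abs]
        calc |u (shift x.2 x.1) - u x.1| ≤ |u (shift x.2 x.1)| + |u x.1| := abs_sub _ _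
        _ ≤ C + C := add_le_add (hC _) (hC _)
      have hmem : MemLp (gradF u) 2 (Mm (Qf p)) :=
        MemLp.of_bound hu.measurable_gradF.aestronglyMeasurable (C + C)
          (Filter.Eventually.of_forall hgb)
      have hw : ((hmem.toLp (gradF u) : Lp ℝ 2 (Mm (Qf p))) : Config d × Zd d → ℝ)
          =ᵐ[Mm (Qf p)] gradF u := MemLp.coeFn_toLp hmem
      have hwmem : hmem.toLp (gradF u) ∈ L2pot (Qf p) :=
        subset_closure ⟨u, hu, hw⟩
      have h0 := h _ hwmem
      rw [MeasureTheory.L2.inner_def] at h0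
      simp only [RCLike.inner_apply, conj_trivial] at h0
      rw [← h0]
      refine integral_congr_ae (hw.mono fun x hx => ?_)
      simp only [hx]
      ring
    · intro h w hw
      have hclosed : IsClosed {w' : Lp ℝ 2 (Mm (Qf p)) | inner (𝕜 := ℝ) v w' = 0} :=
        isClosed_eq (Continuous.inner continuous_const continuous_id) continuous_const
      refine closure_minimal ?_ hclosed hw
      rintro w' ⟨u, hu, hw'⟩
      show inner (𝕜 := ℝ) v w' = 0
      rw [MeasureTheory.L2.inner_def]
      simp only [RCLike.inner_apply, conj_trivial]
      have hcg : ∫ a, (v : Config d × Zd d → ℝ) a * (w' : Config d × Zd d → ℝ) a ∂(Mm (Qf p))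
          = ∫ x, (v : Config d × Zd d → ℝ) x * gradF u x ∂(Mm (Qf p)) :=
        integral_congr_ae (hw'.mono fun x hx => by simp only [hx])
      rw [show ∫ a, (w' : Config d × Zd d → ℝ) a * (v : Config d × Zd d → ℝ) a ∂(Mm (Qf p))
          = ∫ a, (v : Config d × Zd d → ℝ) a * (w' : Config d × Zd d → ℝ) a ∂(Mm (Qf p)) from
        integral_congr_ae (Filter.Eventually.of_forall fun x => mul_comm _ _), hcg]
      exact h u hu
  -- step 2: rewrite the pairing using the divergence field
  have hiff2 : (∀ u : Config d → ℝ, IsLocal u →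
      ∫ x, (v : Config d × Zd d → ℝ) x * gradF u x ∂(Mm (Qf p)) = 0) ↔
      (∀ u : Config d → ℝ, IsLocal u → ∫ ω, Dfield v ω * u ω ∂(Qf p) = 0) := by
    have hflip : ∀ u : Config d → ℝ,
        ∫ x, (v : Config d × Zd d → ℝ) x * gradF u x ∂(Mm (Qf p))
          = ∫ x, gradF u x * (v : Config d × Zd d → ℝ) x ∂(Mm (Qf p)) := fun u =>
      integral_congr_ae (Filter.Eventually.of_forall fun x => mul_comm _ _)
    constructor
    · intro h u hu
      have h1 := h u hu
      rw [hflip u, pairing hQ v u hu, neg_eq_zero] at h1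
      exact h1
    · intro h u hu
      rw [hflip u, pairing hQ v u hu, neg_eq_zero]
      exact h u hu
  -- step 3: vanishing of all pairings is equivalent to the field vanishing a.e.
  have hiff3 : (∀ u : Config d → ℝ, IsLocal u →
      ∫ ω, Dfield v ω * u ω ∂(Qf p) = 0) ↔ Dfield v =ᵐ[Qf p] 0 := by
    constructor
    · intro h
      exact ae_zero_of_forall_local (integrable_Dfield hQ v) h
    · intro h u hu
      refine integral_eq_zero_of_ae (h.mono fun ω hω => ?_)
      rw [Pi.zero_apply] at hω
      simp [hω]
  -- step 4: pointwise characterization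
  have hiff4 : (Dfield v =ᵐ[Qf p] 0) ↔
      (∀ᵐ ω ∂(Qf p), ω ∈ InfiniteCluster0 d →
        divStarF ω (fun ω' e => (v : Config d × Zd d → ℝ) (ω', e)) = 0) := by
    constructor
    · intro h
      exact h.mono fun ω hω => (Dfield_zero_iff v ω).1 (by simpa using hω)
    · intro h
      refine h.mono fun ω hω => ?_
      have := (Dfield_zero_iff v ω).2 hω
      simpa using this
  exact hiff1.trans (hiff2.trans (hiff3.trans hiff4))

end PercWalk
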